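/- arXiv:2311.11799 — 3 statements merged into one kernel-verified Lean document; each statement's English description precedes it below -/
import Mathlib

section
/- Let G be the graph on 6 vertices consisting of a path v_1 v_2 v_3 v_4 v_5 together with a pendant vertex v_6 adjacent to v_3. Then the point x = (1/2, 0, 1/2, 0, 1/2, 0) (coordinates indexed by v_1,...,v_6) satisfies x_e := Σ_{v ∈ e} x_v ≥ 1 for every hyperedge e of H_3(G), with equality for every hyperedge, and x is not integral; in particular the covering polyhedron {x ≥ 0 : Ax ≥ 1} of H_3(G) has a non-integral point satisfying all hyperedge constraints with equality. -/
def G7 : SimpleGraph (Fin 6) :=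
  SimpleGraph.fromRel (fun a b =>
    (a = 0 ∧ b = 1) ∨ (a = 1 ∧ b = 2) ∨ (a = 2 ∧ b = 3) ∨
    (a = 3 ∧ b = 4) ∨ (a = 2 ∧ b = 5))

def IsPath3Hyperedge {V : Type*} (G : SimpleGraph V) (s : Finset V) : Prop :=
  s.card = 4 ∧ ∃ a b c d : V, a ≠ b ∧ a ≠ c ∧ a ≠ d ∧ b ≠ c ∧ b ≠ d ∧ c ≠ d ∧
    G.Adj a b ∧ G.Adj b c ∧ G.Adj c d ∧ a ∈ s ∧ b ∈ s ∧ c ∈ s ∧ d ∈ s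

instance : DecidableRel G7.Adj := fun a b => by
  rw [G7, SimpleGraph.fromRel_adj]; infer_instance

instance : DecidablePred (IsPath3Hyperedge G7) := fun s => by
  unfold IsPath3Hyperedge; infer_instance

lemma key : ∀ e : Finset (Fin 6), IsPath3Hyperedge G7 e →
    e = {0,1,2,3} ∨ e = {1,2,3,4} ∨ e = {0,1,2,5} ∨ e = {2,3,4,5} := by decide

/-- The point `x = (1/2, 0, 1/2, 0, 1/2, 0)` is nonnegative, satisfies every
hyperedge constraint of `H_3(G7)` with equality, and is not integral: a
non-integral point of the covering polyhedron with all hyperedge constraints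
tight. -/
theorem stmt7 :
    (∀ v : Fin 6, 0 ≤ (![1/2, 0, 1/2, 0, 1/2, 0] : Fin 6 → ℝ) v) ∧
    (∀ e : Finset (Fin 6), IsPath3Hyperedge G7 e →
      ∑ v ∈ e, (![1/2, 0, 1/2, 0, 1/2, 0] : Fin 6 → ℝ) v = 1) ∧
    ¬ (∀ v : Fin 6, ∃ z : ℤ, (![1/2, 0, 1/2, 0, 1/2, 0] : Fin 6 → ℝ) v = z) := by
  refine ⟨?_, ?_, ?_⟩
  · intro v; fin_cases v <;> norm_num
  · intro e he
    rcases key e he with rfl | rfl | rfl | rfl <;>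
      rw [show ((1:ℝ)) = 1 from rfl] <;> simp <;>
      (try rw [show (![(2:ℝ)⁻¹,0,2⁻¹,0,2⁻¹,0] : Fin 6 → ℝ) 5 = 0 from rfl]) <;> norm_num
  · intro h
    obtain ⟨z, hz⟩ := h 0
    simp at hz
    have h2 : ((2*z : ℤ) : ℝ) = 1 := by push_cast; rw [← hz]; norm_num
    have : (2*z : ℤ) = 1 := by exact_mod_cast h2
    omega
end

section
/- Let n ≥ 3 and let A be the (n−2) × (n+1) 0/1 matrix whose rows are indexed by i = 3,...,n, with row i having ones exactly in columns 0, 1, 2, and i (columns indexed 0,...,n). Then A is totally unimodular. -/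
open Matrix

/-- Each column is zero, all-ones, or a standard unit vector. -/
def ColOk {k : ℕ} (M : Matrix (Fin k) (Fin k) ℝ) (j : Fin k) : Prop :=
  (∀ i, M i j = 0) ∨ (∀ i, M i j = 1) ∨
    (∃ i0, ∀ i, M i j = if i = i0 then 1 else 0)

lemma key_s13 : ∀ (k : ℕ) (M : Matrix (Fin k) (Fin k) ℝ), (∀ j, ColOk M j) →
    M.det ∈ ({0, 1, -1} : Set ℝ) := by
  intro k
  induction k with
  | zero =>
    intro M _
    right; left
    exact Matrix.det_fin_zero
  | succ k ih =>
    intro M hM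
    by_cases hz : ∃ j, ∀ i, M i j = 0
    · obtain ⟨j, hj⟩ := hz
      left
      exact Matrix.det_eq_zero_of_column_eq_zero j hj
    by_cases hu : ∃ j i0, ∀ i, M i j = if i = i0 then 1 else 0
    · obtain ⟨j, i0, hj⟩ := hu
      set M' : Matrix (Fin (k+1)) (Fin (k+1)) ℝ :=
        M.submatrix (Equiv.swap 0 i0) (Equiv.swap 0 j) with hM'def
      -- relation between det M and det M'
      have hdet : M'.det = ((Equiv.Perm.sign (Equiv.swap 0 i0) : ℤ) : ℝ) *
          (((Equiv.Perm.sign (Equiv.swap 0 j) : ℤ) : ℝ) * M.det) := by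
        have h1 : M' = (M.submatrix id (Equiv.swap 0 j)).submatrix (Equiv.swap 0 i0) id := rfl
        rw [h1, Matrix.det_permute, Matrix.det_permute']
      -- column 0 of M' is the unit vector at row 0
      have hcol0 : ∀ i, M' i 0 = if i = (0 : Fin (k+1)) then 1 else 0 := by
        intro i
        have : M' i 0 = M (Equiv.swap 0 i0 i) j := by
          simp [hM'def, Matrix.submatrix_apply]
        rw [this, hj]
        by_cases hi : i = 0
        · simp [hi]
        · have : Equiv.swap 0 i0 i ≠ i0 := by
            intro h
            apply hi
            have := (Equiv.swap 0 i0).injective (a₁ := i) (a₂ := i0)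
            simpa [Equiv.swap_apply_right] using congrArg (Equiv.swap 0 i0).symm h
          simp [hi, this]
      -- minor
      set N : Matrix (Fin k) (Fin k) ℝ := M'.submatrix Fin.succ Fin.succ with hNdef
      have hN : ∀ j', ColOk N j' := by
        intro j'
        have hc : Equiv.swap 0 j j'.succ ≠ j := by
          intro h
          have := (Equiv.swap 0 j).injective (a₁ := j'.succ) (a₂ := j)
          have h0 : j'.succ = (0 : Fin (k+1)) := by
            have := congrArg (Equiv.swap 0 j).symm h
            simpa [Equiv.swap_apply_right] using this
          exact (Fin.succ_ne_zero j') h0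
        rcases hM (Equiv.swap 0 j j'.succ) with h | h | ⟨i1, h⟩
        · left; intro i; simp [hNdef, hM'def, Matrix.submatrix_apply, h]
        · right; left; intro i; simp [hNdef, hM'def, Matrix.submatrix_apply, h]
        · -- unit column
          have hent : ∀ i : Fin k, N i j' =
              if i.succ = Equiv.swap 0 i0 i1 then 1 else 0 := by
            intro i
            have : N i j' = M (Equiv.swap 0 i0 i.succ) (Equiv.swap 0 j j'.succ) := rfl
            rw [this, h]
            simp only [Equiv.apply_eq_iff_eq_symm_apply, Equiv.symm_swap]
          by_cases ht : Equiv.swap 0 i0 i1 = 0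
          · left; intro i; rw [hent i, ht]; simp [Fin.succ_ne_zero]
          · obtain ⟨s, hs⟩ : ∃ s : Fin k, s.succ = Equiv.swap 0 i0 i1 :=
              Fin.exists_succ_eq.mpr ht
            right; right
            exact ⟨s, fun i => by rw [hent i, ← hs]; simp [Fin.succ_inj]⟩
      have hexp : M'.det = N.det := by
        rw [Matrix.det_succ_column_zero, Finset.sum_eq_single (0 : Fin (k+1))]
        · rw [hcol0]
          simp [hNdef, Fin.succAbove_zero]
        · intro i _ hi
          rw [hcol0]
          simp [hi]
        · simp
      have hNmem := ih N hN
      have hneg : ∀ x : ℝ, x ∈ ({0,1,-1} : Set ℝ) → -x ∈ ({0,1,-1} : Set ℝ) := by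
        intro x hx
        simp only [Set.mem_insert_iff, Set.mem_singleton_iff] at hx ⊢
        rcases hx with rfl | rfl | rfl <;> norm_num
      rw [hexp] at hdet
      rcases Int.units_eq_one_or (Equiv.Perm.sign (Equiv.swap 0 i0)) with h1 | h1 <;>
        rcases Int.units_eq_one_or (Equiv.Perm.sign (Equiv.swap 0 j)) with h2 | h2 <;>
        rw [h1, h2] at hdet <;> push_cast at hdet
      · have h3 : M.det = N.det := by linarith
        rwa [h3]
      · have : M.det = -N.det := by linarith
        rw [this]; exact hneg _ hNmem
      · have : M.det = -N.det := by linarith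
        rw [this]; exact hneg _ hNmem
      · have : M.det = N.det := by linarith
        rwa [this]
    · -- all columns are all-ones
      have hall : ∀ j i, M i j = 1 := by
        intro j i
        rcases hM j with h | h | ⟨i0, h⟩
        · exact absurd ⟨j, h⟩ hz
        · exact h i
        · exact absurd ⟨j, i0, h⟩ hu
      rcases Nat.eq_zero_or_pos k with hk | hk
      · subst hk
        right; left
        rw [Matrix.det_fin_one]
        exact hall 0 0
      · left
        have h01 : (0 : Fin (k+1)) ≠ ⟨1, by omega⟩ := by
          intro h; exact absurd (congrArg Fin.val h) (by simp)
        exact Matrix.det_zero_of_column_eq h01 (fun i => by rw [hall, hall])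

/-- A real matrix is totally unimodular if every square submatrix has
determinant 0, 1, or -1. -/
def TU {m n : ℕ} (A : Matrix (Fin m) (Fin n) ℝ) : Prop :=
  ∀ (k : ℕ) (f : Fin k → Fin m) (g : Fin k → Fin n),
    Function.Injective f → Function.Injective g →
    (A.submatrix f g).det ∈ ({0, 1, -1} : Set ℝ)

/-- For `n ≥ 3`, the `(n−2) × (n+1)` 0/1 matrix whose rows (indexed by
`i = 3, …, n`) have ones exactly in columns `0, 1, 2` and `i` is totally
unimodular. -/
theorem stmt13 (n : ℕ) (hn : 3 ≤ n) :
    TU (Matrix.of fun (r : Fin (n - 2)) (c : Fin (n + 1)) =>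
      if (c : ℕ) ≤ 2 ∨ (c : ℕ) = (r : ℕ) + 3 then (1 : ℝ) else 0) := by
  intro k f g hf hg
  apply key_s13
  intro j
  by_cases hc : ((g j : ℕ) ≤ 2)
  · right; left
    intro i
    simp [Matrix.submatrix_apply, hc]
  by_cases he : ∃ i0, (g j : ℕ) = (f i0 : ℕ) + 3
  · obtain ⟨i0, h0⟩ := he
    right; right
    refine ⟨i0, fun i => ?_⟩
    by_cases hi : i = i0
    · subst hi
      simp [Matrix.submatrix_apply, h0]
    · have hne : (g j : ℕ) ≠ (f i : ℕ) + 3 := by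
        intro h
        exact hi (hf (Fin.ext (by omega)))
      simp [Matrix.submatrix_apply, hc, hne, hi]
  · left
    intro i
    have hne : (g j : ℕ) ≠ (f i : ℕ) + 3 := fun h => he ⟨i, h⟩
    simp [Matrix.submatrix_apply, hc, hne]
end

section
/- Let k ≥ 12 with k ≡ 0 (mod 4) and define x ∈ R^k (indices 1,...,k) by x_1 = x_2 = 1/2, x_3 = 0, and for i ≥ 4: x_i = 1/2 if i is even and x_i = 0 if i is odd. Then for every set of four cyclically consecutive indices {i, i+1, i+2, i+3} (mod k), the sum x_i + x_{i+1} + x_{i+2} + x_{i+3} ≥ 1, and exactly 4 of these k constraints hold with strict inequality. -/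
/-- For `k ≡ 0 (mod 4)`, `k ≥ 12`, the half-integral vector
`(1/2)(1,1,0,1,0,1,0,…)` (i.e. `x₁ = x₂ = 1/2`, `x₃ = 0`, and for `i ≥ 4`,
`xᵢ = 1/2` iff `i` is even, indices `1, …, k` read in `ZMod k` where index `k`
corresponds to `0`) satisfies all `k` cyclic window-of-4 covering constraints,
exactly 4 of them with strict inequality. -/
theorem stmt17 (k : ℕ) (h12 : 12 ≤ k) (h4 : k % 4 = 0) (x : ZMod k → ℝ)
    (hx : ∀ i : ZMod k, x i =
      if i.val = 1 ∨ i.val = 2 then 1/2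
      else if i.val = 3 then 0
      else if i.val % 2 = 0 then 1/2 else 0) :
    (∀ i : ZMod k, 1 ≤ x i + x (i + 1) + x (i + 2) + x (i + 3)) ∧
    {i : ZMod k | 1 < x i + x (i + 1) + x (i + 2) + x (i + 3)}.ncard = 4 := by
  haveI : NeZero k := ⟨by omega⟩
  haveI : Fact (1 < k) := ⟨by omega⟩
  have h2 : 2 ∣ k := by omega
  have hval1 : (1 : ZMod k).val = 1 := ZMod.val_one k
  have hj1 : ∀ j : ZMod k, j = 1 ↔ j.val = 1 := by
    intro j
    constructor
    · intro h; rw [h, hval1]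
    · intro h; exact ZMod.val_injective k (by rw [h, hval1])
  -- cleaner description of x
  have hx' : ∀ j : ZMod k, x j = if j = 1 ∨ j.val % 2 = 0 then 1/2 else 0 := by
    intro j
    rw [hx j]
    by_cases h1 : j.val = 1
    · rw [if_pos (Or.inl h1), if_pos (Or.inl ((hj1 j).mpr h1))]
    by_cases hb : j.val % 2 = 0
    · have h3 : j.val ≠ 3 := by omega
      have hcon : j = 1 ∨ j.val % 2 = 0 := Or.inr hb
      by_cases hc : j.val = 2
      · rw [if_pos (Or.inr hc), if_pos hcon]
      · rw [if_neg (by tauto), if_neg h3, if_pos hb, if_pos hcon]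
    · have hc2 : j.val ≠ 2 := by omega
      have hnot : ¬(j = 1 ∨ j.val % 2 = 0) := by
        rintro (h | h)
        · exact h1 ((hj1 j).mp h)
        · exact hb h
      by_cases h3 : j.val = 3
      · rw [if_neg (by tauto), if_pos h3, if_neg hnot]
      · rw [if_neg (by tauto), if_neg h3, if_neg hb, if_neg hnot]
  -- parity of successor
  have hp1 : ∀ a : ZMod k, (a + 1).val % 2 = (a.val + 1) % 2 := by
    intro a
    rw [ZMod.val_add, hval1]
    exact Nat.mod_mod_of_dvd _ h2
  have h20 : (2 : ZMod k) ≠ 0 := by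
    intro h
    have : ((2 : ℕ) : ZMod k) = 0 := by push_cast; linear_combination h
    rw [ZMod.natCast_eq_zero_iff] at this
    exact absurd (Nat.le_of_dvd (by norm_num) this) (by omega)
  have key : ∀ i : ZMod k,
      (1 ≤ x i + x (i + 1) + x (i + 2) + x (i + 3)) ∧
      ((1 < x i + x (i + 1) + x (i + 2) + x (i + 3)) ↔
        (i = 1 ∨ i + 1 = 1 ∨ i + 2 = 1 ∨ i + 3 = 1)) := by
    intro i
    have e2 : i + 2 = i + 1 + 1 := by ring
    have e3 : i + 3 = i + 1 + 1 + 1 := by ring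
    have hv1 := hp1 i
    have hv2 : (i + 2).val % 2 = ((i + 1).val + 1) % 2 := by rw [e2]; exact hp1 (i + 1)
    have hv3 : (i + 3).val % 2 = ((i + 2).val + 1) % 2 := by
      rw [e3, e2]; exact hp1 (i + 1 + 1)
    rcases Nat.mod_two_eq_zero_or_one i.val with hv | hv
    · -- i even: x i = x (i+2) = 1/2
      have X0 : x i = 1/2 := by rw [hx' i, if_pos (Or.inr hv)]
      have X2 : x (i + 2) = 1/2 := by
        rw [hx', if_pos (Or.inr (by omega))]
      have X1 : x (i + 1) = if i + 1 = 1 then 1/2 else 0 := by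
        rw [hx' (i + 1)]
        have hne : ¬((i + 1).val % 2 = 0) := by omega
        simp [hne]
      have X3 : x (i + 3) = if i + 3 = 1 then 1/2 else 0 := by
        rw [hx' (i + 3)]
        have hne : ¬((i + 3).val % 2 = 0) := by omega
        simp [hne]
      have n0 : i ≠ 1 := by
        intro h; rw [(hj1 i).mp h] at hv; omega
      have n2 : i + 2 ≠ 1 := by
        intro h
        have := (hj1 _).mp h
        omega
      rw [X0, X1, X2, X3]
      constructor
      · split_ifs <;> norm_num
      · by_cases p1 : i + 1 = 1 <;> by_cases p3 : i + 3 = 1 <;>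
          simp [p1, p3, n0, n2, h20] <;> norm_num
    · -- i odd: x (i+1) = x (i+3) = 1/2
      have X1 : x (i + 1) = 1/2 := by rw [hx', if_pos (Or.inr (by omega))]
      have X3 : x (i + 3) = 1/2 := by rw [hx', if_pos (Or.inr (by omega))]
      have X0 : x i = if i = 1 then 1/2 else 0 := by
        rw [hx' i]
        have hne : ¬(i.val % 2 = 0) := by omega
        simp [hne]
      have X2 : x (i + 2) = if i + 2 = 1 then 1/2 else 0 := by
        rw [hx' (i + 2)]
        have hne : ¬((i + 2).val % 2 = 0) := by omega
        simp [hne]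
      have n1 : i + 1 ≠ 1 := by
        intro h; have := (hj1 _).mp h; omega
      have n3 : i + 3 ≠ 1 := by
        intro h; have := (hj1 _).mp h; omega
      rw [X0, X1, X2, X3]
      constructor
      · split_ifs <;> norm_num
      · by_cases p0 : i = 1 <;> by_cases p2 : i + 2 = 1 <;>
          simp [p0, p2, n1, n3, h20] <;> norm_num
  refine ⟨fun i => (key i).1, ?_⟩
  have hset : {i : ZMod k | 1 < x i + x (i + 1) + x (i + 2) + x (i + 3)}
      = {1, 0, -1, -2} := by
    ext i
    simp only [Set.mem_setOf_eq, (key i).2, Set.mem_insert_iff, Set.mem_singleton_iff]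
    have q1 : i + 1 = 1 ↔ i = 0 := by constructor <;> intro h <;> linear_combination h
    have q2 : i + 2 = 1 ↔ i = -1 := by constructor <;> intro h <;> linear_combination h
    have q3 : i + 3 = 1 ↔ i = -2 := by constructor <;> intro h <;> linear_combination h
    rw [q1, q2, q3]
  rw [hset]
  -- now count the explicit set
  have hz : ∀ n : ℕ, 0 < n → n < k → ((n : ℕ) : ZMod k) ≠ 0 := by
    intro n h1 h2' h
    rw [ZMod.natCast_eq_zero_iff] at h
    exact absurd (Nat.le_of_dvd h1 h) (by omega)
  have d10 : (1 : ZMod k) ≠ 0 := by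
    intro h; exact hz 1 (by norm_num) (by omega) (by exact_mod_cast h)
  have d1m1 : (1 : ZMod k) ≠ -1 := by
    intro h; exact hz 2 (by norm_num) (by omega) (by push_cast; linear_combination h)
  have d1m2 : (1 : ZMod k) ≠ -2 := by
    intro h; exact hz 3 (by norm_num) (by omega) (by push_cast; linear_combination h)
  have d0m1 : (0 : ZMod k) ≠ -1 := by
    intro h; exact hz 1 (by norm_num) (by omega) (by push_cast; linear_combination h)
  have d0m2 : (0 : ZMod k) ≠ -2 := by
    intro h; exact hz 2 (by norm_num) (by omega) (by push_cast; linear_combination h)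
  have dm1m2 : (-1 : ZMod k) ≠ -2 := by
    intro h; exact hz 1 (by norm_num) (by omega) (by push_cast; linear_combination h)
  rw [Set.ncard_insert_of_notMem (by simp [d10, d1m1, d1m2]) (Set.toFinite _),
    Set.ncard_insert_of_notMem (by simp [d0m1, d0m2]) (Set.toFinite _),
    Set.ncard_insert_of_notMem (by simp [dm1m2]) (Set.toFinite _),
    Set.ncard_singleton]
end
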